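/- arXiv:2202.00704 — 2 statements merged into one kernel-verified Lean document; each statement's English description precedes it below -/
import Mathlib

section
/- Let p be a prime with p ≠ 2 and p ≠ 5. Then 2·ν_p(F(p−ε)) = ν_p(L(p−ε) − 2ε), where ε = ±1 is determined by p mod 5. -/
/-- The Lucas sequence: `L 0 = 2`, `L 1 = 1`, `L (n+2) = L (n+1) + L n`. -/
def lucas : ℕ → ℕ
  | 0 => 2
  | 1 => 1
  | n + 2 => lucas (n + 1) + lucas n

/-- `ε = 1` if `p ≡ 1, 4 (mod 5)` and `ε = -1` if `p ≡ 2, 3 (mod 5)`. -/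
def epsZ (p : ℕ) : ℤ := if p % 5 = 1 ∨ p % 5 = 4 then 1 else -1

/-- The natural number `p - ε` for `p ∉ {2, 5}`. -/
def pSubEps (p : ℕ) : ℕ := if p % 5 = 1 ∨ p % 5 = 4 then p - 1 else p + 1



lemma cassini (n : ℕ) :
    (Nat.fib (n+1) : ℤ)^2 - Nat.fib n * Nat.fib (n+2) = (-1)^n := by
  induction n with
  | zero => simp
  | succ n ih =>
    have h1 : (Nat.fib (n+2) : ℤ) = Nat.fib n + Nat.fib (n+1) := by
      rw [Nat.fib_add_two]; push_cast; ring
    have h2 : (Nat.fib (n+3) : ℤ) = Nat.fib (n+1) + Nat.fib (n+2) := by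
      rw [show n+3 = (n+1)+2 from rfl, Nat.fib_add_two]; push_cast; ring
    simp only [show n+1+1 = n+2 from rfl, show n+1+2 = n+3 from rfl, pow_succ]
    rw [h2, h1]
    rw [h1] at ih
    linear_combination (-1:ℤ) * ih

lemma lucas_eq_fib (n : ℕ) : (lucas n : ℤ) = 2 * Nat.fib (n+1) - Nat.fib n := by
  induction n using Nat.twoStepInduction with
  | zero => simp [lucas]
  | one => simp [lucas]
  | more n ih1 ih2 =>
    have h1 : (Nat.fib (n+2) : ℤ) = Nat.fib n + Nat.fib (n+1) := by
      rw [Nat.fib_add_two]; push_cast; ring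
    have h2 : (Nat.fib (n+3) : ℤ) = Nat.fib (n+1) + Nat.fib (n+2) := by
      rw [show n+3 = (n+1)+2 from rfl, Nat.fib_add_two]; push_cast; ring
    show ((lucas (n+1) + lucas n : ℕ) : ℤ) = _
    push_cast
    rw [show n+2+1 = n+3 from rfl]
    simp only [show n+1+1 = n+2 from rfl] at ih2
    linear_combination ih1 + ih2 - 2 * h2 + h1

lemma lucas_sq (n : ℕ) :
    (lucas n : ℤ)^2 - 5 * (Nat.fib n : ℤ)^2 = 4 * (-1)^n := by
  have h1 : (Nat.fib (n+2) : ℤ) = Nat.fib n + Nat.fib (n+1) := by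
    rw [Nat.fib_add_two]; push_cast; ring
  have cas := cassini n
  rw [h1] at cas
  linear_combination 4 * cas +
    ((lucas n : ℤ) + 2 * (Nat.fib (n+1):ℤ) - Nat.fib n) * lucas_eq_fib n

instance fact5prime : Fact (Nat.Prime 5) := ⟨by norm_num⟩

open Polynomial in
lemma lucas_mod (p : ℕ) [hpf : Fact p.Prime] (hp2 : p ≠ 2) (hp5 : p ≠ 5) :
    ((lucas (pSubEps p) : ZMod p)) = ((2 * epsZ p : ℤ) : ZMod p) := by
  have hp := hpf.out
  -- 5 is nonzero mod p
  have h5ne : ((5:ℤ) : ZMod p) ≠ 0 := by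
    intro h
    rw [ZMod.intCast_zmod_eq_zero_iff_dvd] at h
    have : p ∣ 5 := by exact_mod_cast h
    exact hp5 ((Nat.prime_dvd_prime_iff_eq hp (by norm_num)).mp this)
  have hmod5 : p % 5 ≠ 0 := by
    intro h
    exact hp5 ((Nat.prime_dvd_prime_iff_eq (by norm_num) hp).mp
      (Nat.dvd_of_mod_eq_zero h)).symm
  -- Legendre symbol of 5
  have hsq : IsSquare ((p:ℕ) : ZMod 5) ↔ IsSquare ((5:ℕ) : ZMod p) :=
    ZMod.exists_sq_eq_prime_iff_of_mod_four_eq_one (p := 5) (q := p) (by norm_num) hp2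
  have hcastp5 : ((p:ℕ) : ZMod 5) = ((p % 5 : ℕ) : ZMod 5) := (ZMod.natCast_mod p 5).symm
  have hleg : legendreSym p 5 = epsZ p := by
    by_cases h : p % 5 = 1 ∨ p % 5 = 4
    · rw [epsZ, if_pos h]
      apply (legendreSym.eq_one_iff p (by exact_mod_cast h5ne)).mpr
      rw [show ((5:ℤ) : ZMod p) = ((5:ℕ) : ZMod p) by push_cast; ring]
      apply hsq.mp
      rw [hcastp5]
      rcases h with h | h
      · rw [h]; exact (by decide : IsSquare (((1:ℕ)) : ZMod 5))
      · rw [h]; exact (by decide : IsSquare (((4:ℕ)) : ZMod 5))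
    · rw [epsZ, if_neg h]
      apply (legendreSym.eq_neg_one_iff p).mpr
      rw [show ((5:ℤ) : ZMod p) = ((5:ℕ) : ZMod p) by push_cast; ring]
      rw [← hsq, hcastp5]
      have h23 : p % 5 = 2 ∨ p % 5 = 3 := by omega
      rcases h23 with h' | h'
      · rw [h']; exact (by decide : ¬ IsSquare (((2:ℕ)) : ZMod 5))
      · rw [h']; exact (by decide : ¬ IsSquare (((3:ℕ)) : ZMod 5))
  have epow : (5 : ZMod p)^(p/2) = ((epsZ p : ℤ) : ZMod p) := by
    have := legendreSym.eq_pow p 5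
    rw [hleg] at this
    rw [show ((5:ℤ):ZMod p) = (5:ZMod p) by push_cast; ring] at this
    exact this.symm
  -- the quadratic extension
  set f : (ZMod p)[X] := X^2 - C (5 : ZMod p) with hf
  have hdeg : f.degree ≠ 0 := by
    rw [hf, Polynomial.degree_X_pow_sub_C (by norm_num : 0 < 2)]
    exact (by decide : (2 : WithBot ℕ) ≠ 0)
  have hinj : Function.Injective (AdjoinRoot.of f) := AdjoinRoot.coe_injective hdeg
  haveI : Nontrivial (AdjoinRoot f) := AdjoinRoot.nontrivial f hdeg
  haveI : CharP (AdjoinRoot f) p := charP_of_injective_ringHom hinj p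
  set r : AdjoinRoot f := AdjoinRoot.root f with hrdef
  have h5R : (AdjoinRoot.of f) (5:ZMod p) = (5: AdjoinRoot f) := map_ofNat _ 5
  have hr : r^2 = (5 : AdjoinRoot f) := by
    have h0 := AdjoinRoot.eval₂_root f
    rw [hf] at h0
    simp only [Polynomial.eval₂_sub, Polynomial.eval₂_pow, Polynomial.eval₂_X,
      Polynomial.eval₂_C] at h0
    rw [← h5R]
    exact sub_eq_zero.mp h0
  clear_value r
  have h2ne : (2 : ZMod p) ≠ 0 := by
    intro h
    have h' : ((2:ℕ) : ZMod p) = 0 := by exact_mod_cast h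
    rw [ZMod.natCast_eq_zero_iff] at h'
    exact hp2 ((Nat.prime_dvd_prime_iff_eq hp (by norm_num)).mp h')
  set u : ZMod p := (2:ZMod p)⁻¹ with hudef
  have h2u : (2:ZMod p) * u = 1 := mul_inv_cancel₀ h2ne
  set c : AdjoinRoot f := AdjoinRoot.of f u with hcdef
  have hc : (2: AdjoinRoot f) * c = 1 := by
    calc (2: AdjoinRoot f)*c = AdjoinRoot.of f ((2:ZMod p)*u) := by
          rw [map_mul, map_ofNat]
    _ = 1 := by rw [h2u, map_one]
  clear_value c
  set α : AdjoinRoot f := (1 + r) * c with hα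
  set β : AdjoinRoot f := (1 - r) * c with hβ
  clear_value u
  clear_value α
  clear_value β
  have hαβ : α * β = -1 := by
    rw [hα, hβ]; linear_combination (-(c^2)) * hr - (1 + 2*c) * hc
  have hα2 : α^2 = α + 1 := by
    rw [hα]; linear_combination c^2*hr + (1+(3+r)*c)*hc
  have hβ2 : β^2 = β + 1 := by
    rw [hβ]; linear_combination c^2*hr + (1+(3-r)*c)*hc
  have closed : ∀ n : ℕ, ((lucas n : AdjoinRoot f) = α^n + β^n) ∧
      ((Nat.fib n : AdjoinRoot f) * r = α^n - β^n) := by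
    intro n
    induction n using Nat.twoStepInduction with
    | zero => exact ⟨by norm_num [lucas], by simp⟩
    | one =>
      constructor
      · show ((1:ℕ) : AdjoinRoot f) = α^1 + β^1
        rw [hα, hβ]; push_cast; linear_combination -hc
      · show ((1:ℕ) : AdjoinRoot f) * r = α^1 - β^1
        rw [hα, hβ]; push_cast; linear_combination -r * hc
    | more n ih1 ih2 =>
      obtain ⟨l1, f1⟩ := ih1
      obtain ⟨l2, f2⟩ := ih2
      constructor
      · show ((lucas (n+1) + lucas n : ℕ) : AdjoinRoot f) = α^(n+2) + β^(n+2)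
        push_cast
        linear_combination l1 + l2 - α^n*hα2 - β^n*hβ2
      · rw [Nat.fib_add_two]
        push_cast
        linear_combination f1 + f2 - α^n*hα2 + β^n*hβ2
  have hpodd : Odd p := hp.odd_of_ne_two hp2
  have hpsplit : 2 * (p/2) + 1 = p := by
    have hdm := Nat.div_add_mod p 2
    have hm2 : p % 2 = 1 := Nat.odd_iff.mp hpodd
    omega
  have hrp : r ^ p = ((epsZ p : ℤ) : AdjoinRoot f) * r := by
    calc r ^ p = (r^2)^(p/2) * r := by rw [← pow_mul, ← pow_succ, hpsplit]
    _ = (AdjoinRoot.of f) ((5:ZMod p)^(p/2)) * r := by rw [hr, map_pow, h5R]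
    _ = ((epsZ p : ℤ) : AdjoinRoot f) * r := by rw [epow, map_intCast]
  have hcard : ∀ x : ZMod p, (AdjoinRoot.of f x)^p = AdjoinRoot.of f x := fun x => by
    rw [← map_pow, ZMod.pow_card]
  have hαp : α ^ p = (1 + ((epsZ p : ℤ) : AdjoinRoot f) * r) * c := by
    rw [hα, mul_pow, add_pow_char, one_pow, hrp, hcdef, hcard u, ← hcdef]
  have hβp : β ^ p = (1 - ((epsZ p : ℤ) : AdjoinRoot f) * r) * c := by
    rw [hβ, mul_pow, sub_eq_add_neg, add_pow_char, one_pow, hpodd.neg_pow, hrp,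
      hcdef, hcard u, ← hcdef]
    ring
  by_cases h : p % 5 = 1 ∨ p % 5 = 4
  · have he : epsZ p = 1 := by rw [epsZ, if_pos h]
    have hn : pSubEps p = p - 1 := by rw [pSubEps, if_pos h]
    rw [he] at hαp hβp
    simp only [Int.cast_one, one_mul] at hαp hβp
    have hα' : α ^ p = α := by rw [hαp, hα]
    have hβ' : β ^ p = β := by rw [hβp, hβ]
    have hαu : α * (-β) = 1 := by linear_combination -hαβ
    have hβu : β * (-α) = 1 := by linear_combination -hαβ
    have hp1 : (p - 1) + 1 = p := Nat.succ_pred_eq_of_pos hp.pos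
    have hα1 : α ^ (p-1) = 1 := by
      calc α^(p-1) = α^(p-1) * (α * (-β)) := by rw [hαu, mul_one]
      _ = α^((p-1)+1) * (-β) := by rw [pow_succ]; ring
      _ = α * (-β) := by rw [hp1, hα']
      _ = 1 := hαu
    have hβ1 : β ^ (p-1) = 1 := by
      calc β^(p-1) = β^(p-1) * (β * (-α)) := by rw [hβu, mul_one]
      _ = β^((p-1)+1) * (-α) := by rw [pow_succ]; ring
      _ = β * (-α) := by rw [hp1, hβ']
      _ = 1 := hβu
    apply hinj
    rw [map_natCast, map_intCast, hn, he, (closed (p-1)).1, hα1, hβ1]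
    norm_num
  · have he : epsZ p = -1 := by rw [epsZ, if_neg h]
    have hn : pSubEps p = p + 1 := by rw [pSubEps, if_neg h]
    rw [he] at hαp hβp
    simp only [Int.cast_neg, Int.cast_one, neg_mul, one_mul] at hαp hβp
    have hα' : α ^ p = β := by rw [hαp, hβ]; ring
    have hβ' : β ^ p = α := by rw [hβp, hα]; ring
    have hα1 : α ^ (p+1) = -1 := by
      rw [pow_succ, hα']; linear_combination hαβ
    have hβ1 : β ^ (p+1) = -1 := by
      rw [pow_succ, hβ']; linear_combination hαβ
    apply hinj
    rw [map_natCast, map_intCast, hn, he, (closed (p+1)).1, hα1, hβ1]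
    norm_num

theorem two_mul_padicValNat_fib_eq_padicValInt_lucas_sub_two_eps
    (p : ℕ) (hp : p.Prime) (hp2 : p ≠ 2) (hp5 : p ≠ 5) :
    padicValInt p ((lucas (pSubEps p) : ℤ) - 2 * epsZ p) =
      2 * padicValNat p (Nat.fib (pSubEps p)) := by
  haveI : Fact p.Prime := ⟨hp⟩
  set n := pSubEps p with hn
  set e := epsZ p with he
  have he2 : e^2 = 1 := by rw [he, epsZ]; split <;> norm_num
  have hpodd : p % 2 = 1 := Nat.odd_iff.mp (hp.odd_of_ne_two hp2)
  have hp3 : 3 ≤ p := by have := hp.two_le; omega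
  have hneven : Even n := by
    rw [hn, pSubEps]
    split
    · exact Nat.even_iff.mpr (by omega)
    · exact Nat.even_iff.mpr (by omega)
  have hn1 : 1 ≤ n := by rw [hn, pSubEps]; split <;> omega
  have hfibpos : 0 < Nat.fib n := Nat.fib_pos.mpr hn1
  have hF : (Nat.fib n : ℤ) ≠ 0 := Int.natCast_ne_zero.mpr hfibpos.ne'
  have key : ((lucas n : ℤ) - 2*e) * ((lucas n : ℤ) + 2*e) = 5 * (Nat.fib n : ℤ)^2 := by
    have hls := lucas_sq n
    have hneg : (-1 : ℤ)^n = 1 := hneven.neg_one_pow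
    linear_combination hls + 4*hneg - 4*he2
  have hndvd : ¬ ((p:ℤ) ∣ ((lucas n : ℤ) + 2*e)) := by
    intro hdvd
    have h0 : (((lucas n : ℤ) + 2*e : ℤ) : ZMod p) = 0 :=
      (ZMod.intCast_zmod_eq_zero_iff_dvd _ p).mpr hdvd
    have hlm := lucas_mod p hp2 hp5
    rw [← hn, ← he] at hlm
    push_cast at h0 hlm
    have h4 : (4 : ZMod p) * ((e:ℤ) : ZMod p) = 0 := by linear_combination h0 - hlm
    have h4' : (4 : ZMod p) = 0 := by
      have := congrArg (· * ((e:ℤ) : ZMod p)) h4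
      simp only [zero_mul, mul_assoc] at this
      rw [show ((e:ℤ) : ZMod p) * ((e:ℤ) : ZMod p) = (((e^2 : ℤ)) : ZMod p) by
        push_cast; ring] at this
      rw [he2] at this
      simpa using this
    have hdvd4 : p ∣ 4 := by
      have : ((4:ℕ) : ZMod p) = 0 := by exact_mod_cast h4'
      exact (ZMod.natCast_eq_zero_iff 4 p).mp this
    have hple : p ≤ 4 := Nat.le_of_dvd (by norm_num) hdvd4
    have hp34 : p = 3 ∨ p = 4 := by omega
    rcases hp34 with h' | h' <;> subst h'
    · norm_num at hdvd4
    · norm_num at hp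
  have ha : (lucas n : ℤ) - 2*e ≠ 0 := by
    intro h0
    rw [h0, zero_mul] at key
    exact (mul_ne_zero (by norm_num) (pow_ne_zero 2 hF)) key.symm
  have hb : (lucas n : ℤ) + 2*e ≠ 0 := fun h0 => hndvd (h0 ▸ dvd_zero _)
  have hvb : padicValInt p ((lucas n : ℤ) + 2*e) = 0 := padicValInt.eq_zero_of_not_dvd hndvd
  have h5v : padicValInt p 5 = 0 := by
    apply padicValInt.eq_zero_of_not_dvd
    intro hd
    have : p ∣ 5 := by exact_mod_cast hd
    exact hp5 ((Nat.prime_dvd_prime_iff_eq hp (by norm_num)).mp this)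
  calc padicValInt p ((lucas n : ℤ) - 2*e)
      = padicValInt p ((lucas n : ℤ) - 2*e) + padicValInt p ((lucas n : ℤ) + 2*e) := by
        rw [hvb, add_zero]
    _ = padicValInt p (((lucas n : ℤ) - 2*e) * ((lucas n : ℤ) + 2*e)) :=
        (padicValInt.mul ha hb).symm
    _ = padicValInt p (5 * (Nat.fib n : ℤ)^2) := by rw [key]
    _ = padicValInt p 5 + padicValInt p ((Nat.fib n : ℤ)^2) :=
        padicValInt.mul (by norm_num) (pow_ne_zero 2 hF)
    _ = 2 * padicValNat p (Nat.fib n) := by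
        rw [h5v, zero_add, sq, padicValInt.mul hF hF, padicValInt.of_nat, two_mul]
end

section
/- Let p be a prime with p ∉ {2, 3, 5}, and let i ∈ {0, 1, …, π(p)−1} be a Lucas zero with respect to p (i.e., L(i) ≡ 0 (mod p)). Then ν_p(L(i)) = ν_p(F(p−ε)). -/
/-- The Pisano period of the Fibonacci sequence modulo `p`: the least `m ≥ 1`
with `F (n + m) ≡ F n (mod p)` for all `n`. -/
noncomputable def pisano (p : ℕ) : ℕ :=
  sInf {m | 1 ≤ m ∧ ∀ n, Nat.fib (n + m) ≡ Nat.fib n [MOD p]}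

open Nat Polynomial

theorem legendreSym_five (p : ℕ) [Fact p.Prime] (hp2 : p ≠ 2) (hp5 : p ≠ 5) :
    legendreSym p 5 = if p % 5 = 1 ∨ p % 5 = 4 then 1 else -1 := by
  have : Fact (Nat.Prime 5) := ⟨Nat.prime_five⟩
  have hmod : p % 5 ≠ 0 := fun h => hp5 <|
    ((Nat.prime_dvd_prime_iff_eq Nat.prime_five Fact.out).mp (Nat.dvd_of_mod_eq_zero h)).symm
  rw [← Nat.cast_ofNat, legendreSym.quadratic_reciprocity_one_mod_four (by norm_num) hp2,
    legendreSym.mod, ← Int.natCast_mod]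
  have : p % 5 < 5 := Nat.mod_lt _ (by norm_num)
  generalize p % 5 = r at *
  interval_cases r <;> first | contradiction | decide +revert

theorem pow_sub_pow_eq_fib_mul {R : Type*} [CommRing R] {x y : R} (hx : x ^ 2 = x + 1)
    (hy : y ^ 2 = y + 1) : ∀ n, x ^ n - y ^ n = fib n * (x - y)
  | 0 => by simp
  | 1 => by simp
  | n + 2 => by
    rw [fib_add_two, cast_add]
    linear_combination pow_sub_pow_eq_fib_mul hx hy n + pow_sub_pow_eq_fib_mul hx hy (n + 1)
      + x ^ n * hx - y ^ n * hy

theorem fib_eq_zero_of_pow_eq_pow {R : Type*} [CommRing R] [IsDomain R] {x y : R}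
    (hx : x ^ 2 = x + 1) (hy : y ^ 2 = y + 1) (hxy : x ≠ y) {n : ℕ} (h : x ^ n = y ^ n) :
    (fib n : R) = 0 := by
  have := pow_sub_pow_eq_fib_mul hx hy n
  rwa [h, sub_self, eq_comm, mul_eq_zero_iff_right (sub_ne_zero.mpr hxy)] at this

theorem pow_sub_pow_eq_legendreSym_mul {R : Type*} [CommRing R] {p : ℕ} [Fact p.Prime]
    [CharP R p] (hp2 : p ≠ 2) {x y : R} (hsq : (x - y) ^ 2 = 5) :
    x ^ p - y ^ p = legendreSym p 5 * (x - y) := by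
  -- Euler's criterion: `(x - y) ^ p = (x - y) * 5 ^ (p / 2)` and `5 ^ (p / 2) = (5 / p)`
  have hodd : p = 2 * (p / 2) + 1 := by
    have := (Fact.out : p.Prime).eq_two_or_odd; omega
  have heuler := congrArg (ZMod.castHom (dvd_refl p) R) (legendreSym.eq_pow p 5)
  rw [map_intCast, map_pow, map_intCast, Int.cast_ofNat] at heuler
  rw [← sub_pow_char, heuler, ← hsq, ← pow_mul, ← pow_succ, ← hodd]

theorem fib_pSubEps_eq_zero {R : Type*} [CommRing R] [IsDomain R] {p : ℕ} [Fact p.Prime]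
    [CharP R p] (hp2 : p ≠ 2) (hp5 : p ≠ 5) {x : R} (hx : x ^ 2 = x + 1) :
    (fib (pSubEps p) : R) = 0 := by
  set y := 1 - x
  have hy : y ^ 2 = y + 1 := by linear_combination hx
  have hxy : x * y = -1 := by linear_combination -hx
  have h2 : (2 : R) ≠ 0 := mod_cast CharP.cast_ne_zero_of_ne_of_prime R Nat.prime_two hp2
  have h5 : (5 : R) ≠ 0 := mod_cast CharP.cast_ne_zero_of_ne_of_prime R Nat.prime_five hp5
  have hsq : (x - y) ^ 2 = 5 := by linear_combination 4 * hx
  have hne : x ≠ y := fun h => h5 (by rw [← hsq, h, sub_self, zero_pow two_ne_zero])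
  have hadd : x ^ p + y ^ p = 1 := by rw [← add_pow_char, add_sub_cancel, one_pow]
  have hfrob := pow_sub_pow_eq_legendreSym_mul hp2 hsq
  rw [legendreSym_five p hp2 hp5] at hfrob
  unfold pSubEps
  split_ifs at hfrob ⊢
  · have hxp : x ^ p = x :=
      mul_left_cancel₀ h2 (by push_cast at hfrob; linear_combination hfrob + hadd)
    have hyp : y ^ p = y := by linear_combination hadd - hxp
    have hunit {z : R} (hz : z ≠ 0) (hzp : z ^ p = z) : z ^ (p - 1) = 1 :=
      mul_left_cancel₀ hz <| by
        rw [← pow_succ' z, Nat.sub_add_cancel (Fact.out : p.Prime).one_le, hzp, mul_one]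
    have hx0 : x ≠ 0 := by rintro rfl; simp at hx
    have hy0 : y ≠ 0 := fun h => by rw [h] at hy; norm_num at hy
    exact fib_eq_zero_of_pow_eq_pow hx hy hne (by rw [hunit hx0 hxp, hunit hy0 hyp])
  · have hxp : x ^ p = y :=
      mul_left_cancel₀ h2 (by push_cast at hfrob; linear_combination hfrob + hadd)
    have hyp : y ^ p = x := by linear_combination hadd - hxp
    exact fib_eq_zero_of_pow_eq_pow hx hy hne
      (by rw [pow_succ, pow_succ, hxp, hyp, hxy, mul_comm, hxy])

theorem dvd_fib_pSubEps {p : ℕ} (hp : p.Prime) (hp2 : p ≠ 2) (hp5 : p ≠ 5) :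
    p ∣ fib (pSubEps p) := by
  have := Fact.mk hp
  obtain ⟨x, hx⟩ := IsAlgClosed.exists_root
    (X ^ 2 - X - 1 : (AlgebraicClosure (ZMod p))[X]) (by
      rw [show (X ^ 2 - X - 1 : (AlgebraicClosure (ZMod p))[X]).degree = 2 by compute_degree!]
      decide)
  rw [← CharP.cast_eq_zero_iff (AlgebraicClosure (ZMod p)) p]
  exact fib_pSubEps_eq_zero hp2 hp5 (by simp at hx; linear_combination hx)

theorem not_dvd_pSubEps {p : ℕ} (hp : p.Prime) : ¬ p ∣ pSubEps p := by
  unfold pSubEps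
  split_ifs
  · exact fun h => by have := Nat.le_of_dvd (by have := hp.two_le; omega) h; omega
  · exact fun h => hp.not_dvd_one ((Nat.dvd_add_right dvd_rfl).mp h)

theorem lucas_add_fib : ∀ n, lucas n + fib n = 2 * fib (n + 1)
  | 0 => rfl
  | 1 => rfl
  | n + 2 => by
    have := lucas_add_fib n
    have := lucas_add_fib (n + 1)
    simp only [lucas, fib_add_two] at *
    omega

theorem fib_mul_lucas (n : ℕ) : fib n * lucas n = fib (2 * n) := by
  rw [fib_two_mul, ← lucas_add_fib, Nat.add_sub_cancel]

theorem lucas_pos : ∀ n, 0 < lucas n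
  | 0 => two_pos
  | 1 => one_pos
  | n + 2 => Nat.add_pos_left (lucas_pos (n + 1)) _

theorem not_dvd_fib_succ_of_dvd_fib {p n : ℕ} (hp : p.Prime) (h : p ∣ fib n) :
    ¬ p ∣ fib (n + 1) :=
  fun h' => hp.not_dvd_one (fib_coprime_fib_succ n ▸ Nat.dvd_gcd h h')

theorem not_dvd_fib_of_dvd_lucas {p n : ℕ} (hp : p.Prime) (hp2 : p ≠ 2) (h : p ∣ lucas n) :
    ¬ p ∣ fib n := by
  intro hf
  have h2 : p ∣ 2 * fib (n + 1) := lucas_add_fib n ▸ dvd_add h hf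
  refine not_dvd_fib_succ_of_dvd_fib hp hf ((Nat.Coprime.dvd_mul_left ?_).mp h2)
  exact (Nat.coprime_primes hp Nat.prime_two).mpr hp2

theorem padicValNat_fib_two_mul_of_not_dvd {p n : ℕ} [Fact p.Prime] (h : ¬ p ∣ fib n) :
    padicValNat p (fib (2 * n)) = padicValNat p (lucas n) := by
  have hn : fib n ≠ 0 := fun h0 => h (h0 ▸ dvd_zero p)
  rw [← fib_mul_lucas, padicValNat.mul hn (lucas_pos n).ne', padicValNat.eq_zero_of_not_dvd h,
    zero_add]

/-- The rank of apparition of `m`; junk value `0` if `m` divides no positive Fibonacci number. -/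
noncomputable def fibEntryPoint (m : ℕ) : ℕ := sInf {n | 0 < n ∧ m ∣ fib n}

theorem fibEntryPoint_pos {m : ℕ} (h : ∃ n, 0 < n ∧ m ∣ fib n) : 0 < fibEntryPoint m :=
  (Nat.sInf_mem h).1

theorem dvd_fib_iff_fibEntryPoint_dvd {m : ℕ} (h : ∃ n, 0 < n ∧ m ∣ fib n) {n : ℕ} :
    m ∣ fib n ↔ fibEntryPoint m ∣ n := by
  refine ⟨fun hn => ?_, fun hd => (Nat.sInf_mem h).2.trans (fib_dvd _ _ hd)⟩
  rcases Nat.eq_zero_or_pos n with rfl | hn0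
  · exact dvd_zero _
  have hgcd : m ∣ fib (Nat.gcd (fibEntryPoint m) n) :=
    fib_gcd _ _ ▸ Nat.dvd_gcd (Nat.sInf_mem h).2 hn
  have hle : fibEntryPoint m ≤ Nat.gcd (fibEntryPoint m) n :=
    Nat.sInf_le ⟨Nat.gcd_pos_of_pos_right _ hn0, hgcd⟩
  exact Nat.gcd_eq_left_iff_dvd.mp
    (le_antisymm (Nat.le_of_dvd (fibEntryPoint_pos h) (Nat.gcd_dvd_left _ _)) hle)

theorem fib_add_two_mul_fib_sub_fib_add_one_sq (n : ℕ) :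
    (fib (n + 2) * fib n : ℤ) - fib (n + 1) ^ 2 = (-1) ^ (n + 1) := by
  have h := Int.fib_succ_mul_fib_pred_sub_fib_sq (n + 1)
  rw [add_sub_cancel_right, add_assoc, one_add_one_eq_two] at h
  rw [← Int.fib_natCast, ← Int.fib_natCast, ← Int.fib_natCast]
  push_cast
  rw [h, show ((n : ℤ) + 1).natAbs = n + 1 by omega]

theorem pisano_le_two_mul {m a : ℕ} (ha : 0 < a) (heven : Even a) (h : m ∣ fib a) :
    pisano m ≤ 2 * a := by
  have hA : (fib a : ZMod m) = 0 := (ZMod.natCast_eq_zero_iff _ _).mpr h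
  have hB : (fib (a + 1) : ZMod m) ^ 2 = 1 := by
    have := congrArg (Int.cast : ℤ → ZMod m) (fib_add_two_mul_fib_sub_fib_add_one_sq a)
    push_cast [hA, heven.add_one.neg_one_pow] at this
    linear_combination -this
  have hshift (n : ℕ) : (fib (n + a) : ZMod m) = fib n * fib (a + 1) := by
    rcases n with _ | n
    · simp [hA]
    · rw [add_right_comm, fib_add, cast_add, cast_mul, cast_mul, hA, mul_zero, zero_add]
  refine Nat.sInf_le ⟨by omega, fun n => (ZMod.natCast_eq_natCast_iff _ _ _).mp ?_⟩
  rw [two_mul, ← add_assoc, hshift, hshift, mul_assoc, ← sq, hB, mul_one]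

theorem fib_mul_fib_mul_add_one_of_sq_eq_zero {R : Type*} [CommRing R] {a : ℕ}
    (ha : (fib a : R) ^ 2 = 0) (k : ℕ) :
    (fib a * fib (a * k + 1) : R) = fib a * fib (a + 1) ^ k := by
  induction k with
  | zero => simp
  | succ k ih =>
    obtain ⟨c, hc⟩ := fib_dvd a (a * k) (dvd_mul_right a k)
    rw [_root_.mul_add_one, fib_add, cast_add, cast_mul, cast_mul, hc, cast_mul]
    linear_combination (c * fib a : R) * ha + (fib (a + 1) : R) * ih

theorem fib_mul_succ_of_sq_eq_zero {R : Type*} [CommRing R] {a : ℕ} (ha : (fib a : R) ^ 2 = 0)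
    (k : ℕ) :
    (fib (a * (k + 1)) : R) = (k + 1) * fib a * fib (a + 1) ^ k := by
  rcases Nat.eq_zero_or_pos a with rfl | ha0
  · simp
  induction k with
  | zero => simp
  | succ k ih =>
    have hprev : (fib (a - 1) : R) = fib (a + 1) - fib a := by
      rw [eq_sub_iff_add_eq, ← cast_add, ← fib_add_one ha0.ne']
    have hcomp := fib_mul_fib_mul_add_one_of_sq_eq_zero ha (k + 1)
    have hsplit : a * (k + 1 + 1) = a * (k + 1) + (a - 1) + 1 := by
      rw [_root_.mul_add_one]; omega
    rw [hsplit, fib_add, Nat.sub_add_cancel ha0, cast_add, cast_mul, cast_mul, ih, hprev]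
    push_cast
    linear_combination (-(k + 1) * fib (a + 1) ^ k : R) * ha + hcomp

theorem padicValNat_fib_mul {p a k : ℕ} [hp : Fact p.Prime] (ha : p ∣ fib a) (hk : ¬ p ∣ k) :
    padicValNat p (fib (a * k)) = padicValNat p (fib a) := by
  rcases Nat.eq_zero_or_pos a with rfl | ha0
  · simp
  obtain ⟨j, rfl⟩ : ∃ j, k = j + 1 :=
    Nat.exists_eq_add_one.mpr (Nat.pos_of_ne_zero (by rintro rfl; exact hk (dvd_zero p)))
  set e := padicValNat p (fib a)
  have hfa : fib a ≠ 0 := (fib_pos.mpr ha0).ne'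
  have hpe : p ^ e ∣ fib a := pow_padicValNat_dvd
  have hsq : (fib a : ZMod (p ^ (e + 1))) ^ 2 = 0 := by
    have he : 1 ≤ e := one_le_padicValNat_of_dvd hfa ha
    rw [← Nat.cast_pow, ZMod.natCast_eq_zero_iff]
    exact (pow_dvd_pow p (by omega : e + 1 ≤ e * 2)).trans
      (pow_mul p e 2 ▸ pow_dvd_pow_of_dvd hpe 2)
  have hunit {n : ℕ} (hn : ¬ p ∣ n) : IsUnit (n : ZMod (p ^ (e + 1))) :=
    (ZMod.isUnit_iff_coprime _ _).mpr
      (Nat.Coprime.pow_right _ (Nat.coprime_comm.mp (hp.out.coprime_iff_not_dvd.mpr hn)))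
  have hnot : ¬ p ^ (e + 1) ∣ fib (a * (j + 1)) := by
    have hB := hunit (not_dvd_fib_succ_of_dvd_fib hp.out ha)
    rw [← ZMod.natCast_eq_zero_iff, fib_mul_succ_of_sq_eq_zero hsq, ← Nat.cast_add_one,
      mul_right_comm, ((hunit hk).mul (hB.pow j)).mul_right_eq_zero, ZMod.natCast_eq_zero_iff]
    exact pow_succ_padicValNat_not_dvd hfa
  have hfak : fib (a * (j + 1)) ≠ 0 := fun h0 => hnot (h0 ▸ dvd_zero _)
  have hle : e ≤ padicValNat p (fib (a * (j + 1))) :=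
    (padicValNat_dvd_iff_le hfak).mp (hpe.trans (fib_dvd _ _ (dvd_mul_right a _)))
  by_contra hne
  exact hnot ((padicValNat_dvd_iff_le hfak).mpr (by omega))

theorem padicValNat_lucas_zero_eq_wall_exponent
    (p : ℕ) (hp : p.Prime) (hp2 : p ≠ 2) (hp3 : p ≠ 3) (hp5 : p ≠ 5)
    (i : ℕ) (hi : i < pisano p) (hL : p ∣ lucas i) :
    padicValNat p (lucas i) = padicValNat p (Nat.fib (pSubEps p)) := by
  have := Fact.mk hp
  have hε : p ∣ fib (pSubEps p) := dvd_fib_pSubEps hp hp2 hp5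
  have hentry : ∃ n, 0 < n ∧ p ∣ fib n :=
    ⟨_, Nat.pos_of_ne_zero fun h => not_dvd_pSubEps hp (by rw [h]; exact dvd_zero p), hε⟩
  set α := fibEntryPoint p
  have hdvd_iff (n : ℕ) : p ∣ fib n ↔ α ∣ n := dvd_fib_iff_fibEntryPoint_dvd hentry
  have hfib : ¬ p ∣ fib i := not_dvd_fib_of_dvd_lucas hp hp2 hL
  obtain ⟨k, hk⟩ : α ∣ 2 * i :=
    (hdvd_iff _).mp (fib_mul_lucas i ▸ dvd_mul_of_dvd_right hL _)
  have hk_odd : Odd k := by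
    refine Nat.not_even_iff_odd.mp fun ⟨k', hk'⟩ => hfib ((hdvd_iff i).mpr ⟨k', ?_⟩)
    rw [hk', ← two_mul] at hk
    linarith
  have hα_even : Even α :=
    (Nat.even_mul.mp (hk ▸ even_two_mul i)).resolve_right (Nat.not_even_iff_odd.mpr hk_odd)
  have hk_lt : k < 4 := by
    have := pisano_le_two_mul (fibEntryPoint_pos hentry) hα_even ((hdvd_iff _).mpr dvd_rfl)
    exact Nat.lt_of_mul_lt_mul_left (a := α) (by omega)
  have hpk : ¬ p ∣ k := by
    obtain rfl | rfl : k = 1 ∨ k = 3 := by obtain ⟨t, rfl⟩ := hk_odd; omega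
    · exact hp.not_dvd_one
    · exact fun h => hp3 ((Nat.prime_dvd_prime_iff_eq hp Nat.prime_three).mp h)
  obtain ⟨k', hk'⟩ := (hdvd_iff _).mp hε
  have hpk' : ¬ p ∣ k' := fun h => not_dvd_pSubEps hp (hk' ▸ dvd_mul_of_dvd_right h α)
  have hα : p ∣ fib α := (hdvd_iff _).mpr dvd_rfl
  rw [← padicValNat_fib_two_mul_of_not_dvd hfib, hk, hk', padicValNat_fib_mul hα hpk,
    padicValNat_fib_mul hα hpk']
end
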